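/- Consider the Jacobian matrix H(ς) ∈ ℝ^{(3L_a-1)×(L_a+3)} of the localization system in equation (23). If all anchor AODs are equal, φ_0 = φ_1 = ⋯ = φ_{L_a-1}, then the columns of H(ς) are linearly dependent, i.e. rank H(ς) < L_a + 3, so HᵀH is singular and the pseudo-inverse H† = (HᵀH)⁻¹Hᵀ does not exist. -/

import Mathlib

/-!
When every anchor is seen under the same angle `θ = ρ - φ_ℓ`, UE and anchors lie on one line.
Sliding the UE one unit along that line while increasing every anchor range by one unit is invisible
to the linearized system: the vector `(cos θ, sin θ, 0, 1, …, 1)` is annihilated by `H(ς)`.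
A nonzero kernel vector of `H` lowers its rank below the number of columns and is also a kernel
vector of `HᵀH`, which therefore is not invertible.
-/

namespace Matrix

theorem rank_lt_card_width_of_mulVec_eq_zero {m n K : Type*} [Fintype m] [Fintype n] [Field K]
    {A : Matrix m n K} {v : n → K} (hv : v ≠ 0) (hAv : A *ᵥ v = 0) :
    A.rank < Fintype.card n := by
  have hker : LinearMap.ker A.mulVecLin ≠ ⊥ := fun h =>
    hv <| (Submodule.mem_bot K).mp (h ▸ LinearMap.mem_ker.mpr hAv)
  have hnullity := Module.finrank_pos_iff (R := K).mpr (Submodule.nontrivial_iff_ne_bot.mpr hker)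
  have hsum := A.mulVecLin.finrank_range_add_finrank_ker
  rw [Module.finrank_fintype_fun_eq_card] at hsum
  unfold rank
  omega

theorem not_isUnit_of_mulVec_eq_zero {n R : Type*} [Fintype n] [DecidableEq n] [Semiring R]
    {A : Matrix n n R} {v : n → R} (hv : v ≠ 0) (hAv : A *ᵥ v = 0) : ¬IsUnit A :=
  fun hA => hv <| mulVec_injective_of_isUnit hA (hAv.trans (mulVec_zero A).symm)

end Matrix

open Matrix

/-- Columns are ordered as `(p_x, p_y, ρ)` followed by the `L_a` anchor ranges. -/
noncomputable def collinearNullVector (La : ℕ) (θ : ℝ) : Fin 3 ⊕ Fin La → ℝ :=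
  Sum.elim ![Real.cos θ, Real.sin θ, 0] fun _ => 1

theorem collinearNullVector_ne_zero (La : ℕ) (θ : ℝ) : collinearNullVector La θ ≠ 0 := by
  intro h
  have hcos : Real.cos θ = 0 := congrFun h (Sum.inl 0)
  have hsin : Real.sin θ = 0 := congrFun h (Sum.inl 1)
  simpa [hcos, hsin] using Real.cos_sq_add_sin_sq θ

section Jacobian

variable {La : ℕ} {H : Matrix (Fin (La - 1) ⊕ Fin La × Fin 2) (Fin 3 ⊕ Fin La) ℝ}

theorem mulVec_collinearNullVector_inl (θ : ℝ)
    (hTL : ∀ (i : Fin (La - 1)) (j : Fin 3), H (Sum.inl i) (Sum.inl j) = 0)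
    (hTR : ∀ (i : Fin (La - 1)) (ℓ : Fin La),
      H (Sum.inl i) (Sum.inr ℓ) =
        if (ℓ : ℕ) = 0 then -1 else if (ℓ : ℕ) = (i : ℕ) + 1 then 1 else 0)
    (i : Fin (La - 1)) : (H *ᵥ collinearNullVector La θ) (Sum.inl i) = 0 := by
  have hi : (i : ℕ) + 1 < La := by have := i.isLt; omega
  have hrow : ∀ ℓ : Fin La, H (Sum.inl i) (Sum.inr ℓ) =
      (if ℓ = ⟨(i : ℕ) + 1, hi⟩ then 1 else 0) - (if ℓ = ⟨0, by omega⟩ then 1 else 0) := by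
    intro ℓ
    rw [hTR]
    simp only [Fin.ext_iff]
    have := ℓ.isLt
    split_ifs <;> first | omega | norm_num
  simp [mulVec, dotProduct, collinearNullVector, hTL, hrow, Finset.sum_sub_distrib]

theorem mulVec_collinearNullVector_inr {ρ θ : ℝ} {φ : Fin La → ℝ}
    (hBL : ∀ (ℓ : Fin La) (s : Fin 2) (j : Fin 3), (j : ℕ) < 2 →
      H (Sum.inr (ℓ, s)) (Sum.inl j) = -(if (j : ℕ) = (s : ℕ) then 1 else 0))
    (hBR : ∀ (ℓ : Fin La) (s : Fin 2) (ℓ' : Fin La),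
      H (Sum.inr (ℓ, s)) (Sum.inr ℓ') =
        if ℓ' = ℓ then
          (if (s : ℕ) = 0 then Real.cos (ρ - φ ℓ) else Real.sin (ρ - φ ℓ))
        else 0)
    (hθ : ∀ ℓ, ρ - φ ℓ = θ) (ℓ : Fin La) (s : Fin 2) :
    (H *ᵥ collinearNullVector La θ) (Sum.inr (ℓ, s)) = 0 := by
  simp only [mulVec, dotProduct, Fintype.sum_sum_type, Fin.sum_univ_three, collinearNullVector,
    Sum.elim_inl, Sum.elim_inr, hBR, hθ]
  rw [hBL ℓ s 0 (by norm_num), hBL ℓ s 1 (by norm_num)]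
  fin_cases s <;> simp

end Jacobian

/-- Proposition 4 (matrix form): for the Jacobian `H(ς)` of (23), if all anchor
AODs are equal then the columns of `H` are linearly dependent
(`rank H < L_a + 3`), so `HᵀH` is singular and `H† = (HᵀH)⁻¹Hᵀ` does not exist. -/
theorem stmt_11 (La : ℕ) (hLa : 2 ≤ La)
    (ρ : ℝ) (φ : Fin La → ℝ)
    (H : Matrix (Fin (La - 1) ⊕ Fin La × Fin 2) (Fin 3 ⊕ Fin La) ℝ)
    -- top-left and top-middle zero blocks
    (hTL : ∀ (i : Fin (La - 1)) (j : Fin 3), H (Sum.inl i) (Sum.inl j) = 0)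
    -- top-right block [-1_{(La-1)×1}, I_{La-1}]
    (hTR : ∀ (i : Fin (La - 1)) (ℓ : Fin La),
      H (Sum.inl i) (Sum.inr ℓ) =
        if (ℓ : ℕ) = 0 then -1 else if (ℓ : ℕ) = (i : ℕ) + 1 then 1 else 0)
    -- bottom-left block −1_{La×1} ⊗ I₂ (derivatives w.r.t. p_x, p_y)
    (hBL : ∀ (ℓ : Fin La) (s : Fin 2) (j : Fin 3), (j : ℕ) < 2 →
      H (Sum.inr (ℓ, s)) (Sum.inl j) = -(if (j : ℕ) = (s : ℕ) then 1 else 0))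
    -- bottom-right block (I ⊗ T₂) diag(ε) (I ⊗ 1_{2×1})
    (hBR : ∀ (ℓ : Fin La) (s : Fin 2) (ℓ' : Fin La),
      H (Sum.inr (ℓ, s)) (Sum.inr ℓ') =
        if ℓ' = ℓ then
          (if (s : ℕ) = 0 then Real.cos (ρ - φ ℓ) else Real.sin (ρ - φ ℓ))
        else 0)
    (hAOD : ∀ ℓ ℓ', φ ℓ = φ ℓ') :
    H.rank < La + 3 ∧ ¬ IsUnit (H.transpose * H) := by
  set θ := ρ - φ ⟨0, by omega⟩
  have hθ : ∀ ℓ, ρ - φ ℓ = θ := fun ℓ => by rw [hAOD ℓ]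
  have hHv : H *ᵥ collinearNullVector La θ = 0 := by
    funext r
    rcases r with i | ⟨ℓ, s⟩
    · exact mulVec_collinearNullVector_inl θ hTL hTR i
    · exact mulVec_collinearNullVector_inr hBL hBR hθ ℓ s
  have hv := collinearNullVector_ne_zero La θ
  refine ⟨?_, ?_⟩
  · simpa [add_comm] using rank_lt_card_width_of_mulVec_eq_zero hv hHv
  · exact not_isUnit_of_mulVec_eq_zero hv (by rw [← mulVec_mulVec, hHv, mulVec_zero])
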